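/- Let σ be the tgd r(X,Y) → ∃Z. p(X,Z), where no strict subset of the attributes of P is a superkey of P (the left position X of p is not a superkey). Consider Q(A) :- r(A,B) and Q'(A) :- r(A,B), p(A,C). Then the chase step is unsound under bag-set semantics: the set-valued database D with R = {(a,b)} and P = {(a,c),(a,d)} satisfies {σ} and yields Q(D,BS) = {{(a)}} but Q'(D,BS) = {{(a),(a)}}. -/

import Mathlib

/-- A relational schema: a type of relation symbols with arities. -/
structure Schema where
  Rel : Type
  ar : Rel → ℕ

/-- A relational atom over schema `S`; variables are natural numbers. -/
structure Atom (S : Schema) where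
  rel : S.Rel
  args : Fin (S.ar rel) → ℕ

/-- A conjunctive query: a head (list of variables) and a body (list of atoms). -/
structure CQ (S : Schema) where
  hd : List ℕ
  body : List (Atom S)

variable {S : Schema} {Dom : Type}

def Atom.rename (f : ℕ → ℕ) (a : Atom S) : Atom S := ⟨a.rel, f ∘ a.args⟩

def CQ.rename (f : ℕ → ℕ) (Q : CQ S) : CQ S := ⟨Q.hd.map f, Q.body.map (Atom.rename f)⟩

/-- The variables of a query. -/
def CQ.vars (Q : CQ S) : Set ℕ := {x | x ∈ Q.hd ∨ ∃ a ∈ Q.body, ∃ i, a.args i = x}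

/-- A bag-valued database: a finite multiset of tuples for each relation symbol. -/
abbrev DB (S : Schema) (Dom : Type) := (r : S.Rel) → Multiset (Fin (S.ar r) → Dom)

/-- A set-valued database: every relation is a set. -/
def IsSetDB (D : DB S Dom) : Prop := ∀ r, (D r).Nodup

/-- An assignment satisfies a list of atoms. -/
def Sat (D : DB S Dom) (body : List (Atom S)) (γ : ℕ → Dom) : Prop :=
  ∀ a ∈ body, (γ ∘ a.args) ∈ D a.rel

/-- Bag-semantics weight of an assignment: product of multiplicities of matched tuples. -/
noncomputable def weight (D : DB S Dom) (Q : CQ S) (γ : ℕ → Dom) : ℕ :=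
  (Q.body.map fun (a : Atom S) =>
    letI : DecidableEq (Fin (S.ar a.rel) → Dom) := Classical.decEq _
    (D a.rel).count (γ ∘ a.args)).prod

/-- Canonical assignments: everything outside the query's variables is a default value. -/
def Canon [Inhabited Dom] (Q : CQ S) (γ : ℕ → Dom) : Prop := ∀ x, x ∉ Q.vars → γ x = default

/-- Bag semantics: multiplicity of the tuple `t` in `Q(D, B)`. -/
noncomputable def bagMult [Inhabited Dom] (D : DB S Dom) (Q : CQ S) (t : List Dom) : ℕ :=
  ∑ᶠ γ ∈ {γ : ℕ → Dom | Canon Q γ ∧ Q.hd.map γ = t}, weight D Q γ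

/-- Bag-set semantics: multiplicity of `t` in `Q(D, BS)`: one per satisfying assignment. -/
noncomputable def bsMult [Inhabited Dom] (D : DB S Dom) (Q : CQ S) (t : List Dom) : ℕ :=
  Nat.card {γ : ℕ → Dom // Canon Q γ ∧ Sat D Q.body γ ∧ Q.hd.map γ = t}

/-- Set semantics: the set of tuples returned by `Q` on `D`. -/
def setAns (D : DB S Dom) (Q : CQ S) : Set (List Dom) :=
  {t | ∃ γ : ℕ → Dom, Sat D Q.body γ ∧ Q.hd.map γ = t}

/-- Query isomorphism: a bijective variable renaming preserving head and body (as multiset). -/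
def CQIso (Q1 Q2 : CQ S) : Prop :=
  ∃ e : ℕ ≃ ℕ, Q1.hd.map ⇑e = Q2.hd ∧
    Multiset.map (Atom.rename ⇑e) (Q1.body : Multiset (Atom S)) = (Q2.body : Multiset (Atom S))

/-- A tuple-generating dependency (tgd) `φ → ∃ Z̄ ψ`: left-hand side atoms, right-hand
side atoms, and a finite set of existentially quantified variables. -/
structure TGD (S : Schema) where
  lhs : List (Atom S)
  rhs : List (Atom S)
  exVars : Finset ℕ

/-- An equality-generating dependency (egd) `φ → eq1 = eq2`. -/
structure EGD (S : Schema) where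
  lhs : List (Atom S)
  eq1 : ℕ
  eq2 : ℕ

/-- An embedded dependency: a tgd or an egd. -/
inductive Dep (S : Schema) where
  | tgd : TGD S → Dep S
  | egd : EGD S → Dep S

/-- Well-formedness of a tgd: existential variables do not occur on the left-hand side,
and every non-existential variable of the right-hand side occurs on the left-hand side. -/
def TGD.wf (σ : TGD S) : Prop :=
  (∀ a ∈ σ.lhs, ∀ i, a.args i ∉ σ.exVars) ∧
  (∀ a ∈ σ.rhs, ∀ i, a.args i ∉ σ.exVars → ∃ b ∈ σ.lhs, ∃ j, b.args j = a.args i)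

/-- A database satisfies a tgd. -/
def TGDSat (D : DB S Dom) (σ : TGD S) : Prop :=
  ∀ γ : ℕ → Dom, (∀ a ∈ σ.lhs, (γ ∘ a.args) ∈ D a.rel) →
    ∃ γ' : ℕ → Dom, (∀ x, x ∉ σ.exVars → γ' x = γ x) ∧
      ∀ a ∈ σ.rhs, (γ' ∘ a.args) ∈ D a.rel

/-- A database satisfies an egd. -/
def EGDSat (D : DB S Dom) (e : EGD S) : Prop :=
  ∀ γ : ℕ → Dom, (∀ a ∈ e.lhs, (γ ∘ a.args) ∈ D a.rel) → γ e.eq1 = γ e.eq2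

/-- A database satisfies an embedded dependency. -/
def DSat (D : DB S Dom) : Dep S → Prop
  | .tgd σ => TGDSat D σ
  | .egd e => EGDSat D e

/-- A database satisfies a (finite) set of embedded dependencies. -/
def DBSat (D : DB S Dom) (Δ : List (Dep S)) : Prop := ∀ d ∈ Δ, DSat D d

/-- Chase with tgd `σ` is applicable to `Q` via `h`: `h` maps the left-hand side into the
body of `Q` and cannot be extended to a homomorphism of the whole dependency. -/
def TgdApplicable (σ : TGD S) (Q : CQ S) (h : ℕ → ℕ) : Prop :=
  (∀ a ∈ σ.lhs, a.rename h ∈ Q.body) ∧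
  ¬ ∃ h' : ℕ → ℕ, (∀ x, x ∉ σ.exVars → h' x = h x) ∧ ∀ a ∈ σ.rhs, a.rename h' ∈ Q.body

/-- `h'` extends `h` by mapping the existential variables injectively to fresh variables. -/
def FreshExt (σ : TGD S) (Q : CQ S) (h h' : ℕ → ℕ) : Prop :=
  (∀ x, x ∉ σ.exVars → h' x = h x) ∧ Set.InjOn h' ↑σ.exVars ∧
  ∀ z ∈ σ.exVars, h' z ∉ Q.vars

/-- The result of a tgd chase step: conjoin the instantiated right-hand side. -/
def TgdResult (σ : TGD S) (Q : CQ S) (h' : ℕ → ℕ) : CQ S :=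
  ⟨Q.hd, Q.body ++ σ.rhs.map (Atom.rename h')⟩

/-- A chase step with a tgd. -/
def TgdStep (σ : TGD S) (Q Q' : CQ S) : Prop :=
  ∃ h h' : ℕ → ℕ, TgdApplicable σ Q h ∧ FreshExt σ Q h h' ∧ Q' = TgdResult σ Q h'

/-- A chase step with an egd: identify the two variables it equates. -/
def EgdStep (e : EGD S) (Q Q' : CQ S) : Prop :=
  ∃ h : ℕ → ℕ, (∀ a ∈ e.lhs, a.rename h ∈ Q.body) ∧ h e.eq1 ≠ h e.eq2 ∧
    (Q' = Q.rename (fun x => if x = h e.eq1 then h e.eq2 else x) ∨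
     Q' = Q.rename (fun x => if x = h e.eq2 then h e.eq1 else x))

/-- A chase step with an embedded dependency. -/
def DepStep : Dep S → CQ S → CQ S → Prop
  | .tgd σ => TgdStep σ
  | .egd e => EgdStep e

/-- A (set-semantics) chase step using some dependency from `Δ`. -/
def SetChaseStep (Δ : List (Dep S)) (Q Q' : CQ S) : Prop := ∃ d ∈ Δ, DepStep d Q Q'

/-- A query is a terminal result of set-semantics chase: no chase step applies. -/
def SetTerminal (Δ : List (Dep S)) (Q : CQ S) : Prop := ¬ ∃ Q', SetChaseStep Δ Q Q'

/-- An atom uses variable `v`. -/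
def Atom.uses (a : Atom S) (v : ℕ) : Prop := ∃ i, a.args i = v

/-- Variable `v` occurs in the body of `Q`. -/
def Occurs (v : ℕ) (Q : CQ S) : Prop := ∃ a ∈ Q.body, a.uses v

/-- All variables of a tgd. -/
def TGD.varSet (σ : TGD S) : Set ℕ :=
  {x | (∃ a ∈ σ.lhs, a.uses x) ∨ (∃ a ∈ σ.rhs, a.uses x) ∨ x ∈ σ.exVars}

/-- A regularized tgd: its right-hand side admits no nonshared partition into two nonempty
parts (i.e., parts sharing no existential variable). -/
def Regularized (σ : TGD S) : Prop :=
  ¬ ∃ l1 l2 : List (Atom S), l1 ≠ [] ∧ l2 ≠ [] ∧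
      ((l1 ++ l2 : List (Atom S)) : Multiset (Atom S)) = (σ.rhs : Multiset (Atom S)) ∧
      ∀ v ∈ σ.exVars, ¬ ((∃ a ∈ l1, a.uses v) ∧ (∃ a ∈ l2, a.uses v))

/-- A pair of fresh extensions of `h` with pairwise distinct fresh images (two disjoint
copies of fresh existential variables). -/
def FreshPair (σ : TGD S) (Q : CQ S) (h h1 h2 : ℕ → ℕ) : Prop :=
  FreshExt σ Q h h1 ∧ FreshExt σ Q h h2 ∧
  ∀ z ∈ σ.exVars, ∀ z' ∈ σ.exVars, h1 z ≠ h2 z'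

/-- The associated test query `Q^{σ,h,θ}`: the body of `Q` conjoined with two copies of the
right-hand side of `σ`, instantiated with two disjoint families of fresh variables. -/
def testQuery (σ : TGD S) (Q : CQ S) (h1 h2 : ℕ → ℕ) : CQ S :=
  ⟨Q.hd, Q.body ++ σ.rhs.map (Atom.rename h1) ++ σ.rhs.map (Atom.rename h2)⟩

/-- `σ` is assignment-fixing w.r.t. `Q` and `h`: in every terminal set-chase result of the
associated test query, at most one of the two fresh copies of each existential variable
still occurs. -/
def AssignmentFixing (Δ : List (Dep S)) (σ : TGD S) (Q : CQ S) (h : ℕ → ℕ) : Prop :=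
  ∀ h1 h2 : ℕ → ℕ, FreshPair σ Q h h1 h2 →
    ∀ R : CQ S, Relation.ReflTransGen (SetChaseStep Δ) (testQuery σ Q h1 h2) R →
      SetTerminal Δ R → ∀ z ∈ σ.exVars, ¬ (Occurs (h1 z) R ∧ Occurs (h2 z) R)

/-- A set `K` of attribute positions of relation `r` is a superkey of `r` with respect to
`Δ`: on every database satisfying `Δ`, tuples of `r` agreeing on `K` are equal. -/
def Superkey (Dom : Type) (Δ : List (Dep S)) (r : S.Rel) (K : Set (Fin (S.ar r))) : Prop :=
  ∀ D : DB S Dom, DBSat D Δ →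
    ∀ t1 ∈ D r, ∀ t2 ∈ D r, (∀ i ∈ K, t1 i = t2 i) → t1 = t2

/-- Relation symbols r and p (both binary). -/
inductive RelRP where
  | r | p

def Srp : Schema := ⟨RelRP, fun _ => 2⟩

/-- σ : r(X,Y) → ∃ Z. p(X,Z)   (X = 0, Y = 1, Z = 2). -/
def tgd16 : TGD Srp := ⟨[⟨RelRP.r, ![0, 1]⟩], [⟨RelRP.p, ![0, 2]⟩], {2}⟩

def Sigma16 : List (Dep Srp) := [Dep.tgd tgd16]

/-- The set-valued database D with R = {(a,b)} and P = {(a,c),(a,d)},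
encoding a = 0, b = 1, c = 2, d = 3. -/
def D16 : DB Srp ℕ := fun x =>
  match x with
  | .r => {![0, 1]}
  | .p => {![0, 2], ![0, 3]}

/-- Q(A) :- r(A,B)   (A = 0, B = 1). -/
def Q16 : CQ Srp := ⟨[0], [⟨RelRP.r, ![0, 1]⟩]⟩

/-- Q'(A) :- r(A,B), p(A,C)   (A = 0, B = 1, C = 2). -/
def Q16' : CQ Srp := ⟨[0], [⟨RelRP.r, ![0, 1]⟩, ⟨RelRP.p, ![0, 2]⟩]⟩

/-!
Position 0 of `p` is not a key: a set database may contain the two `p`-tuples `(a,c)` and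
`(a,d)` next to the single `r`-tuple `(a,b)`, and it still satisfies `σ`. Adding the chase atom
`p(A,C)` to `Q` lets `C` range over both `c` and `d`, so the one satisfying assignment of `Q`
splits into two of `Q'`, doubling the bag-set multiplicity of the answer `(a)`.
-/

section Canonical

variable [Inhabited Dom]

theorem Canon.ext {Q : CQ S} {γ δ : ℕ → Dom} (hγ : Canon Q γ) (hδ : Canon Q δ)
    (h : ∀ x ∈ Q.vars, γ x = δ x) : γ = δ := by
  funext x
  by_cases hx : x ∈ Q.vars
  · exact h x hx
  · rw [hγ x hx, hδ x hx]

def answerAssignments (D : DB S Dom) (Q : CQ S) (t : List Dom) : Set (ℕ → Dom) :=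
  {γ | Canon Q γ ∧ Sat D Q.body γ ∧ Q.hd.map γ = t}

theorem bsMult_eq_ncard (D : DB S Dom) (Q : CQ S) (t : List Dom) :
    bsMult D Q t = (answerAssignments D Q t).ncard :=
  Nat.card_coe_set_eq _

end Canonical

theorem not_superkey_of_mem {Δ : List (Dep S)} {r : S.Rel} {K : Set (Fin (S.ar r))}
    {D : DB S Dom} (hD : DBSat D Δ) {t₁ t₂ : Fin (S.ar r) → Dom} (h₁ : t₁ ∈ D r)
    (h₂ : t₂ ∈ D r) (hK : ∀ i ∈ K, t₁ i = t₂ i) (hne : t₁ ≠ t₂) : ¬ Superkey Dom Δ r K :=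
  fun hkey => hne (hkey D hD t₁ h₁ t₂ h₂ hK)

theorem mem_D16_r (t : Fin (Srp.ar .r) → ℕ) : t ∈ D16 .r ↔ t = ![0, 1] :=
  Multiset.mem_singleton

theorem mem_D16_p (t : Fin (Srp.ar .p) → ℕ) : t ∈ D16 .p ↔ t = ![0, 2] ∨ t = ![0, 3] :=
  Multiset.mem_cons.trans (or_congr_right Multiset.mem_singleton)

theorem isSetDB_D16 : IsSetDB D16 := by
  intro rel
  cases rel <;> decide

theorem dbSat_D16 : DBSat D16 Sigma16 := by
  simp only [DBSat, Sigma16, List.mem_singleton, forall_eq, DSat, TGDSat, tgd16]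
  intro γ hγ
  rw [mem_D16_r] at hγ
  have h0 : γ 0 = 0 := congrFun hγ (0 : Fin 2)
  refine ⟨Function.update γ 2 2,
    fun x hx => Function.update_of_ne (Finset.notMem_singleton.1 hx) _ _, ?_⟩
  rw [mem_D16_p]
  left
  funext i
  fin_cases i
  · exact h0
  · rfl

theorem sat_Q16_iff (γ : ℕ → ℕ) : Sat D16 Q16.body γ ↔ γ 0 = 0 ∧ γ 1 = 1 := by
  simp only [Sat, Q16, List.forall_mem_cons, List.not_mem_nil, IsEmpty.forall_iff, mem_D16_r]
  simp [funext_iff, Srp, Fin.forall_fin_two]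

theorem sat_Q16'_iff (γ : ℕ → ℕ) :
    Sat D16 Q16'.body γ ↔ γ 0 = 0 ∧ γ 1 = 1 ∧ (γ 2 = 2 ∨ γ 2 = 3) := by
  simp only [Sat, Q16', List.forall_mem_cons, List.not_mem_nil, IsEmpty.forall_iff,
    mem_D16_p, mem_D16_r]
  simp [funext_iff, Srp, Fin.forall_fin_two]
  tauto

theorem vars_Q16 : Q16.vars = {0, 1} := by
  ext x
  simp only [CQ.vars, Q16, Set.mem_ofPred_eq, List.mem_singleton, exists_eq_left]
  simp [Srp, Fin.exists_fin_two]
  omega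

theorem vars_Q16' : Q16'.vars = {0, 1, 2} := by
  ext x
  simp only [CQ.vars, Q16', Set.mem_ofPred_eq, List.mem_cons, exists_eq_or_imp, exists_eq_left,
    List.not_mem_nil, or_false]
  simp [Srp, Fin.exists_fin_two]
  omega

theorem answerAssignments_Q16 :
    answerAssignments D16 Q16 [0] = {Function.update (0 : ℕ → ℕ) 1 1} := by
  have hcanon : Canon Q16 (Function.update (0 : ℕ → ℕ) 1 1) := by
    intro x hx
    simp_all [vars_Q16]
  ext γ
  simp only [answerAssignments, Set.mem_ofPred_eq, Set.mem_singleton_iff, sat_Q16_iff]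
  constructor
  · rintro ⟨hc, ⟨h0, h1⟩, -⟩
    refine hc.ext hcanon ?_
    simp [vars_Q16, h0, h1]
  · rintro rfl
    refine ⟨hcanon, ?_⟩
    simp [Q16]

theorem answerAssignments_Q16' :
    answerAssignments D16 Q16' [0] =
      {Function.update (Function.update (0 : ℕ → ℕ) 1 1) 2 2,
        Function.update (Function.update (0 : ℕ → ℕ) 1 1) 2 3} := by
  have hcanon (c : ℕ) : Canon Q16' (Function.update (Function.update (0 : ℕ → ℕ) 1 1) 2 c) := by
    intro x hx
    simp_all [vars_Q16']
  ext γ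
  simp only [answerAssignments, Set.mem_ofPred_eq, Set.mem_insert_iff, Set.mem_singleton_iff,
    sat_Q16'_iff]
  constructor
  · rintro ⟨hc, ⟨h0, h1, h2⟩, -⟩
    rcases h2 with h2 | h2
    · exact Or.inl (hc.ext (hcanon 2) (by simp [vars_Q16', h0, h1, h2]))
    · exact Or.inr (hc.ext (hcanon 3) (by simp [vars_Q16', h0, h1, h2]))
  · rintro (rfl | rfl) <;> refine ⟨hcanon _, ?_⟩ <;> simp [Q16']

/-- since the first position of P is not a superkey of P under {σ}, the
chase step adding p(A,C) to Q is unsound under bag-set semantics: the set-valued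
database D16 satisfies {σ} and yields Q(D,BS) = {(a)} but Q'(D,BS) = {(a),(a)}. -/
theorem non_key_based_chase_step_unsound_bag_set :
    ¬ Superkey ℕ Sigma16 RelRP.p {(0 : Fin 2)} ∧
    IsSetDB D16 ∧
    DBSat D16 Sigma16 ∧
    bsMult D16 Q16 [0] = 1 ∧
    bsMult D16 Q16' [0] = 2 := by
  refine ⟨?_, isSetDB_D16, dbSat_D16, ?_, ?_⟩
  · refine not_superkey_of_mem dbSat_D16 ((mem_D16_p ![0, 2]).2 (Or.inl rfl))
      ((mem_D16_p ![0, 3]).2 (Or.inr rfl)) (by rintro i rfl; rfl)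
      fun h => by simpa using congrFun h (1 : Fin 2)
  · rw [bsMult_eq_ncard, answerAssignments_Q16, Set.ncard_singleton]
  · rw [bsMult_eq_ncard, answerAssignments_Q16', Set.ncard_pair]
    exact fun h => by simpa using congrFun h 2
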